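/- Let K be a non-archimedean local field, X ⊆ K compact-open, and T : X → X locally scaling for radius r with scaling function C. Let H = X/B_r(0) be the set of r-ball cosets contained in X. For i, j ∈ H, a ∈ j, and r' ≤ r in the value group, the set i ∩ T^{-1}(B_{r'}(a)) is empty if i ∩ T^{-1}(j) is empty, and otherwise is a ball of radius r'/C(i). -/

import Mathlib

/-!
On the ball `B = B_r(b)` the map `T` is a similarity with ratio `C(b)`, and the value group
supplies a `w ∈ K` with `|w| = C(b)`. Conjugating `T` by the affine map `v ↦ b + (v - T b) / w`
gives an isometry of the compact ball `B_{C(b) r}(T b)` into itself, which must be onto; so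
`T(B) = B_{C(b) r}(T b)`. If some point of `B` lands in `j = B_r(c)`, this ball contains `j`, so
`a = T y` for some `y ∈ B`, and then `B ∩ T⁻¹(B_{r'}(a)) = B_{r'/C(b)}(y)` because `T` scales
distances from `y` by `C(b)`.
-/

open Metric Set Function

theorem Isometry.iterate {α : Type*} [PseudoEMetricSpace α] {f : α → α} (hf : Isometry f) :
    ∀ n : ℕ, Isometry f^[n]
  | 0 => isometry_id
  | n + 1 => (hf.iterate n).comp hf

/-- The orbit of `a` has a convergent subsequence, so some iterate `f^[k] a` with `k ≥ 1` is
arbitrarily close to `a`. -/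
theorem Isometry.surjective_of_compactSpace {α : Type*} [MetricSpace α] [CompactSpace α]
    {f : α → α} (hf : Isometry f) : Surjective f := by
  intro a
  have hclosed : IsClosed (range f) := (isCompact_range hf.continuous).isClosed
  suffices a ∈ closure (range f) by rwa [hclosed.closure_eq] at this
  rw [Metric.mem_closure_iff]
  intro ε hε
  obtain ⟨L, -, φ, hφ, hlim⟩ :=
    isCompact_univ.tendsto_subseq (x := fun n => f^[n] a) (fun _ => mem_univ _)
  obtain ⟨N, hN⟩ := Metric.cauchySeq_iff'.mp hlim.cauchySeq ε hε
  have hlt : φ N < φ (N + 1) := hφ N.lt_succ_self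
  set k := φ (N + 1) - φ N
  refine ⟨f^[k] a, ⟨f^[k - 1] a, ?_⟩, ?_⟩
  · rw [← iterate_succ_apply' f]
    congr
    omega
  · have horbit : f^[φ N] (f^[k] a) = f^[φ (N + 1)] a := by
      rw [← iterate_add_apply]
      congr
      omega
    rw [← (hf.iterate (φ N)).dist_eq, horbit, dist_comm]
    exact hN (N + 1) N.le_succ

section Similarity

variable {K : Type*} [NormedField K] {T : K → K} {b : K} {r s : ℝ}

theorem image_closedBall_of_norm_sub_eq_norm_mul [ProperSpace K] {w : K} (hw : w ≠ 0)
    (hT : ∀ x ∈ closedBall b r, ∀ y ∈ closedBall b r, ‖T x - T y‖ = ‖w‖ * ‖x - y‖) :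
    T '' closedBall b r = closedBall (T b) (‖w‖ * r) := by
  have hw' : 0 < ‖w‖ := norm_pos_iff.mpr hw
  set S := closedBall (T b) (‖w‖ * r)
  set p : K → K := fun v => b + (v - T b) / w
  have hp_sub : ∀ v v', p v - p v' = (v - v') / w := fun v v' => by ring
  have hp_mem : ∀ v ∈ S, p v ∈ closedBall b r := fun v hv => by
    rw [mem_closedBall, dist_eq_norm, show p v - b = (v - T b) / w by ring, norm_div,
      div_le_iff₀ hw', mul_comm, ← dist_eq_norm]
    exact hv
  have hp_dist : ∀ v ∈ S, ∀ v' ∈ S, ‖T (p v) - T (p v')‖ = ‖v - v'‖ := fun v hv v' hv' => by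
    rw [hT _ (hp_mem v hv) _ (hp_mem v' hv'), hp_sub, norm_div]
    field_simp
  apply Subset.antisymm
  · rintro _ ⟨x, hx, rfl⟩
    have hb : b ∈ closedBall b r := mem_closedBall_self (dist_nonneg.trans hx)
    rw [mem_closedBall, dist_eq_norm, hT x hx b hb, ← dist_eq_norm]
    exact mul_le_mul_of_nonneg_left hx hw'.le
  · have hmaps : MapsTo (T ∘ p) S S := fun v hv => by
      have hTb : T b ∈ S := mem_closedBall_self (dist_nonneg.trans hv)
      have hpTb : p (T b) = b := by simp [p]
      rw [mem_closedBall, dist_eq_norm, comp_apply, ← hpTb, hp_dist v hv _ hTb, ← dist_eq_norm]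
      exact hv
    have : CompactSpace S := isCompact_iff_compactSpace.mp (isCompact_closedBall _ _)
    have hiso : Isometry (hmaps.restrict) := Isometry.of_dist_eq fun v v' => by
      simp only [Subtype.dist_eq, MapsTo.val_restrict_apply, comp_apply, dist_eq_norm]
      exact hp_dist v v.2 v' v'.2
    intro a ha
    obtain ⟨v, hv⟩ := hiso.surjective_of_compactSpace ⟨a, ha⟩
    exact ⟨p v, hp_mem v v.2, congrArg Subtype.val hv⟩

theorem image_closedBall_of_norm_sub_eq_mul [ProperSpace K] {z : K} (hz : z ≠ 0) (hs : 0 < s)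
    (hT : ∀ x ∈ closedBall b ‖z‖, ∀ y ∈ closedBall b ‖z‖, ‖T x - T y‖ = s * ‖x - y‖) :
    T '' closedBall b ‖z‖ = closedBall (T b) (s * ‖z‖) := by
  have hz' : 0 < ‖z‖ := norm_pos_iff.mpr hz
  have hbz : b + z ∈ closedBall b ‖z‖ := by simp [mem_closedBall, dist_eq_norm]
  have hw : ‖(T (b + z) - T b) / z‖ = s := by
    rw [norm_div, hT _ hbz _ (mem_closedBall_self hz'.le), add_sub_cancel_left]
    field_simp
  have hw0 : (T (b + z) - T b) / z ≠ 0 := norm_pos_iff.mp (hw ▸ hs)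
  rw [← hw]
  exact image_closedBall_of_norm_sub_eq_norm_mul hw0 (hw ▸ hT)

theorem closedBall_inter_preimage_closedBall [IsUltrametricDist K] {y : K} {r' : ℝ}
    (hs : 0 < s) (hy : y ∈ closedBall b r) (hr' : r' / s ≤ r)
    (hT : ∀ x ∈ closedBall b r, ∀ y ∈ closedBall b r, ‖T x - T y‖ = s * ‖x - y‖) :
    closedBall b r ∩ T ⁻¹' closedBall (T y) r' = closedBall y (r' / s) := by
  have hball : closedBall b r = closedBall y r := IsUltrametricDist.closedBall_eq_of_mem hy
  ext x
  simp only [mem_inter_iff, mem_preimage]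
  constructor
  · rintro ⟨hx, hTx⟩
    rw [mem_closedBall, dist_eq_norm, hT x hx y hy] at hTx
    rw [mem_closedBall, dist_eq_norm, le_div_iff₀ hs, mul_comm]
    exact hTx
  · intro hx
    have hx' : x ∈ closedBall b r := hball ▸ closedBall_subset_closedBall hr' hx
    rw [mem_closedBall, dist_eq_norm, le_div_iff₀ hs, mul_comm] at hx
    refine ⟨hx', ?_⟩
    rw [mem_closedBall, dist_eq_norm, hT x hx' y hy]
    exact hx

end Similarity

section LocallyScaling

variable {K : Type*} [NormedField K] [IsUltrametricDist K] {X : Set K} {r : ℝ} {T : K → K}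
  {C : K → ℝ}

theorem norm_sub_eq_of_locallyScaling (hXr : ∀ x ∈ X, closedBall x r ⊆ X)
    (hscal : ∀ x ∈ X, ∀ y ∈ X, ‖x - y‖ ≤ r → ‖T x - T y‖ = C x * ‖x - y‖) {b : K} (hb : b ∈ X) :
    ∀ x ∈ closedBall b r, ∀ y ∈ closedBall b r, ‖T x - T y‖ = C b * ‖x - y‖ := by
  have hB := hXr b hb
  have hsmall : ∀ x ∈ closedBall b r, ∀ y ∈ closedBall b r, ‖x - y‖ ≤ r := fun x hx y hy => by
    rw [← dist_eq_norm]
    exact (IsUltrametricDist.dist_triangle_max x b y).trans (max_le hx (by rwa [dist_comm]))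
  -- `C` is constant on the ball: compare the scaling identities at `x` and at `b`.
  have hC : ∀ x ∈ closedBall b r, C x = C b := fun x hx => by
    rcases eq_or_ne x b with rfl | hne
    · rfl
    have hxb : ‖x - b‖ ≤ r := by rwa [mem_closedBall, dist_eq_norm] at hx
    have h₂ := hscal b hb x (hB hx) (norm_sub_rev x b ▸ hxb)
    rw [norm_sub_rev (T b), norm_sub_rev b, hscal x (hB hx) b hb hxb] at h₂
    exact mul_right_cancel₀ (norm_ne_zero_iff.mpr (sub_ne_zero.mpr hne)) h₂
  intro x hx y hy
  rw [hscal x (hB hx) y (hB hy) (hsmall x hx y hy), hC x hx]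

end LocallyScaling

theorem stmt4_general {K : Type*} [NontriviallyNormedField K] [IsUltrametricDist K]
    [ProperSpace K]
    (X : Set K)
    (r : ℝ) (hr : ∃ z : K, z ≠ 0 ∧ ‖z‖ = r)
    (hXr : ∀ x ∈ X, closedBall x r ⊆ X)
    (T : K → K)
    (C : K → ℝ) (hC1 : ∀ x ∈ X, 1 ≤ C x)
    (hscal : ∀ x ∈ X, ∀ y ∈ X, ‖x - y‖ ≤ r → ‖T x - T y‖ = C x * ‖x - y‖) :
    ∀ b ∈ X, ∀ c ∈ X, ∀ a ∈ closedBall c r, ∀ r' : ℝ,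
      (∃ z : K, z ≠ 0 ∧ ‖z‖ = r') → r' ≤ r →
      (closedBall b r ∩ T ⁻¹' (closedBall c r) = ∅ →
        closedBall b r ∩ T ⁻¹' (closedBall a r') = ∅) ∧
      (closedBall b r ∩ T ⁻¹' (closedBall c r) ≠ ∅ →
        ∃ y : K, closedBall b r ∩ T ⁻¹' (closedBall a r') = closedBall y (r' / C b)) := by
  obtain ⟨z, hz, rfl⟩ := hr
  intro b hb c _ a ha r' ⟨z', _, hz'⟩ hr'r
  have hball : closedBall c ‖z‖ = closedBall a ‖z‖ := IsUltrametricDist.closedBall_eq_of_mem ha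
  refine ⟨fun h => subset_empty_iff.mp (h ▸ ?_), fun h => ?_⟩
  · exact inter_subset_inter_right _ (preimage_mono (hball ▸ closedBall_subset_closedBall hr'r))
  have hC : 0 < C b := one_pos.trans_le (hC1 b hb)
  have hT := norm_sub_eq_of_locallyScaling hXr hscal hb
  have himage := image_closedBall_of_norm_sub_eq_mul hz hC hT
  obtain ⟨x₀, hx₀, hTx₀⟩ := nonempty_iff_ne_empty.mpr h
  have ha' : a ∈ T '' closedBall b ‖z‖ := by
    rw [himage, IsUltrametricDist.closedBall_eq_of_mem (himage ▸ mem_image_of_mem T hx₀)]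
    exact closedBall_subset_closedBall (le_mul_of_one_le_left (norm_nonneg z) (hC1 b hb))
      (by rw [← IsUltrametricDist.closedBall_eq_of_mem hTx₀]; exact ha)
  obtain ⟨y, hy, rfl⟩ := ha'
  exact ⟨y, closedBall_inter_preimage_closedBall hC hy
    ((div_le_self (hz' ▸ norm_nonneg z') (hC1 b hb)).trans hr'r) hT⟩

/-- For a locally scaling transformation `T` for radius `r` with scaling
function `C`, and `r`-ball cosets `i = B_r(b)`, `j = B_r(c)` contained in `X`, a point
`a ∈ j`, and `r' ≤ r` in the value group: the set `i ∩ T⁻¹(B_{r'}(a))` is empty when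
`i ∩ T⁻¹(j)` is empty, and otherwise is a ball of radius `r'/C(i)`. -/
theorem stmt4 {K : Type*} [NontriviallyNormedField K] [IsUltrametricDist K]
    [CompleteSpace K] [ProperSpace K]
    (X : Set K) (hXc : IsCompact X) (hXo : IsOpen X)
    (r : ℝ) (hr : ∃ z : K, z ≠ 0 ∧ ‖z‖ = r)
    (hXr : ∀ x ∈ X, closedBall x r ⊆ X)
    (T : K → K) (hT : Set.MapsTo T X X)
    (C : K → ℝ) (hC1 : ∀ x ∈ X, 1 ≤ C x)
    (hscal : ∀ x ∈ X, ∀ y ∈ X, ‖x - y‖ ≤ r → ‖T x - T y‖ = C x * ‖x - y‖) :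
    ∀ b ∈ X, ∀ c ∈ X, ∀ a ∈ closedBall c r, ∀ r' : ℝ,
      (∃ z : K, z ≠ 0 ∧ ‖z‖ = r') → r' ≤ r →
      (closedBall b r ∩ T ⁻¹' (closedBall c r) = ∅ →
        closedBall b r ∩ T ⁻¹' (closedBall a r') = ∅) ∧
      (closedBall b r ∩ T ⁻¹' (closedBall c r) ≠ ∅ →
        ∃ y : K, closedBall b r ∩ T ⁻¹' (closedBall a r') = closedBall y (r' / C b)) :=
  stmt4_general X r hr hXr T C hC1 hscal
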